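/- arXiv:1806.04271 — 8 statements merged into one kernel-verified Lean document; each statement's English description precedes it below -/
import Mathlib

section
/- Let L be a quasi orthoalgebra and a, b, c ∈ L. If a⊕b and a⊕c are both defined and a⊕b = a⊕c, then b = c. -/
/-- A quasi orthoalgebra: a set `L` with two distinguished distinct elements `zero` and
`one` and a partially defined binary operation `oplus` (modelled as `Option`-valued:
`oplus a b = some c` means `a ⊕ b` is defined and equals `c`).  The field `compl`
together with `compl_oplus` and `compl_unique` expresses axiom (oaiii): for each `a`
there is a unique `a'` with `a ⊕ a'` defined and `a ⊕ a' = 1`. -/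
structure QuasiOrthoalgebra (L : Type*) where
  zero : L
  one : L
  oplus : L → L → Option L
  compl : L → L
  zero_ne_one : zero ≠ one
  /-- (oai) commutativity -/
  comm : ∀ a b c, oplus a b = some c → oplus b a = some c
  /-- (oaii) -/
  oplus_zero : ∀ a, oplus a zero = some a
  /-- (oaiii) existence -/
  compl_oplus : ∀ a, oplus a (compl a) = some one
  /-- (oaiii) uniqueness -/
  compl_unique : ∀ a b, oplus a b = some one → b = compl a
  /-- (oaiv) -/
  oaiv : ∀ a b c, oplus (compl a) b = some c → (oplus a c).isSome → b = zero
  /-- (oav) -/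
  oav : ∀ a b c, oplus a b = some c → (oplus a c).isSome → a = zero
  /-- (oavi) -/
  oavi : ∀ a b c, oplus a b = some c → oplus a (compl c) = some (compl b)

namespace QuasiOrthoalgebra

variable {L : Type*} (Q : QuasiOrthoalgebra L)

/-- `a ⊥ b` iff `a ⊕ b` is defined. -/
def Perp (a b : L) : Prop := (Q.oplus a b).isSome

/-- `a ≤ b` iff there is `c` with `a ⊕ c = b`. -/
def Le (a b : L) : Prop := ∃ c, Q.oplus a c = some b

end QuasiOrthoalgebra

/-- In a quasi orthoalgebra, if `a ⊕ b` and `a ⊕ c` are both defined and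
`a ⊕ b = a ⊕ c`, then `b = c`. -/
theorem stmt1 {L : Type*} (Q : QuasiOrthoalgebra L) (a b c d : L)
    (hb : Q.oplus a b = some d) (hc : Q.oplus a c = some d) : b = c := by
  have hcompl : ∀ x : L, Q.compl (Q.compl x) = x := fun x =>
    (Q.compl_unique (Q.compl x) x (Q.comm x (Q.compl x) Q.one (Q.compl_oplus x))).symm
  have h1 := Q.oavi a b d hb
  have h2 := Q.oavi a c d hc
  have : Q.compl b = Q.compl c := by rw [h1] at h2; exact Option.some.inj h2
  calc b = Q.compl (Q.compl b) := (hcompl b).symm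
    _ = Q.compl (Q.compl c) := by rw [this]
    _ = c := hcompl c
end

section
/- Let L be a quasi orthoalgebra, with a ≤ b defined to mean that there exists c ∈ L with a⊕c defined and a⊕c = b. Then the relation ≤ is reflexive and antisymmetric. -/
/-- In a quasi orthoalgebra, the relation `a ≤ b` (there exists `c` with `a ⊕ c = b`)
is reflexive and antisymmetric. -/
theorem stmt3 {L : Type*} (Q : QuasiOrthoalgebra L) :
    (∀ a : L, Q.Le a a) ∧ ∀ a b : L, Q.Le a b → Q.Le b a → a = b := by
  constructor
  · intro a
    exact ⟨Q.zero, Q.oplus_zero a⟩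
  · rintro a b ⟨c, h1⟩ ⟨d, h2⟩
    -- from a⊕c=b : c⊕a=b, then c⊕b' = a', then b'⊕c = a'
    have hca : Q.oplus c a = some b := Q.comm a c b h1
    have hcb : Q.oplus c (Q.compl b) = some (Q.compl a) := Q.oavi c a b hca
    have hbc : Q.oplus (Q.compl b) c = some (Q.compl a) := Q.comm c (Q.compl b) _ hcb
    -- from b⊕d=a : b⊕a' = d', so b⊕a' is defined
    have hba : Q.oplus b (Q.compl a) = some (Q.compl d) := Q.oavi b d a h2
    have hsome : (Q.oplus b (Q.compl a)).isSome := by rw [hba]; rfl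
    have hc0 : c = Q.zero := Q.oaiv b c (Q.compl a) hbc hsome
    rw [hc0, Q.oplus_zero] at h1
    exact Option.some.inj h1
end

section
/- Let L be a quasi orthoalgebra. (1) If s is a two-valued probability measure on L, then I_s := {a ∈ L : s(a) = 0} is a prime ideal of L. (2) If I is a prime ideal of L, then the map s_I : L → {0,1} defined by s_I(a) = 0 if a ∈ I and s_I(a) = 1 otherwise is a two-valued probability measure on L. Moreover, these two assignments are mutually inverse, giving a one-to-one correspondence between two-valued probability measures and prime ideals of L. -/
namespace QuasiOrthoalgebra

variable {L : Type*} (Q : QuasiOrthoalgebra L)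

/-- A probability measure (state) on `L`: a map `s : L → [0,1] ⊆ ℝ` with `s 1 = 1`
which is additive on orthogonal pairs. -/
def IsState (s : L → ℝ) : Prop :=
  (∀ a, 0 ≤ s a ∧ s a ≤ 1) ∧ s Q.one = 1 ∧
    ∀ a b c, Q.oplus a b = some c → s c = s a + s b

/-- A two-valued probability measure takes only the values `0` and `1`. -/
def IsTwoValuedState (s : L → ℝ) : Prop :=
  Q.IsState s ∧ ∀ a, s a = 0 ∨ s a = 1

/-- An ideal of `L`. -/
def IsIdeal (I : Set L) : Prop :=
  I.Nonempty ∧ (∀ a ∈ I, ∀ b, Q.Le b a → b ∈ I) ∧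
    ∀ a ∈ I, ∀ b ∈ I, ∀ c, Q.oplus a b = some c → c ∈ I

/-- A prime ideal of `L`: an ideal containing, for every `a ∈ L`, either `a` or `a'`
(and, the two cases being mutually exclusive, exactly one of them). -/
def IsPrimeIdeal (I : Set L) : Prop :=
  Q.IsIdeal I ∧ ∀ a : L, Xor' (a ∈ I) (Q.compl a ∈ I)

end QuasiOrthoalgebra

open Classical in
/-- The one-to-one correspondence between two-valued probability measures and prime
ideals of a quasi orthoalgebra: `s ↦ I_s = {a | s a = 0}` and
`I ↦ s_I = (fun a => if a ∈ I then 0 else 1)` are well defined and mutually inverse. -/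
theorem stmt7 {L : Type*} (Q : QuasiOrthoalgebra L) :
    (∀ s : L → ℝ, Q.IsTwoValuedState s → Q.IsPrimeIdeal {a | s a = 0}) ∧
    (∀ I : Set L, Q.IsPrimeIdeal I →
      Q.IsTwoValuedState (fun a => if a ∈ I then (0 : ℝ) else 1)) ∧
    (∀ s : L → ℝ, Q.IsTwoValuedState s →
      (fun a => if a ∈ {b | s b = 0} then (0 : ℝ) else 1) = s) ∧
    (∀ I : Set L, Q.IsPrimeIdeal I →
      {a | (if a ∈ I then (0 : ℝ) else 1) = 0} = I) := by
  constructor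
  · -- (1) two-valued state gives prime ideal
    rintro s ⟨⟨hb, h1, hadd⟩, htv⟩
    have hszero : s Q.zero = 0 := by
      have := hadd Q.zero Q.zero Q.zero (Q.oplus_zero Q.zero)
      linarith
    have hcompl : ∀ a, s (Q.compl a) = 1 - s a := by
      intro a
      have := hadd a (Q.compl a) Q.one (Q.compl_oplus a)
      linarith
    refine ⟨⟨⟨Q.zero, hszero⟩, ?_, ?_⟩, ?_⟩
    · rintro a ha b ⟨c, hc⟩
      have := hadd b c a hc
      have h1 := (hb b).1
      have h2 := (hb c).1
      simp only [Set.mem_setOf_eq] at ha ⊢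
      linarith
    · intro a ha b hbI c hc
      have := hadd a b c hc
      simp only [Set.mem_setOf_eq] at ha hbI ⊢
      linarith
    · intro a
      have hs := hcompl a
      rcases htv a with h | h
      · left
        refine ⟨h, ?_⟩
        simp only [Set.mem_setOf_eq]
        rw [hs, h]; norm_num
      · right
        refine ⟨?_, ?_⟩
        · simp only [Set.mem_setOf_eq]
          rw [hs, h]; norm_num
        · simp only [Set.mem_setOf_eq, h]; norm_num
  constructor
  · -- (2) prime ideal gives two-valued state
    rintro I ⟨⟨hne, hdown, hsum⟩, hprime⟩
    have honeI : Q.one ∉ I := by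
      intro h1
      have hall : ∀ a : L, a ∈ I := fun a =>
        hdown Q.one h1 a ⟨Q.compl a, Q.compl_oplus a⟩
      rcases hprime Q.zero with ⟨_, h⟩ | ⟨_, h⟩ <;> exact h (hall _)
    -- if a ⊥ b with a ∉ I and b ∉ I, contradiction
    have hkey : ∀ a b c, Q.oplus a b = some c → a ∉ I → b ∈ I := by
      intro a b c hc haI
      have hca : Q.compl a ∈ I := by
        rcases hprime a with ⟨h, _⟩ | ⟨h, _⟩
        · exact absurd h haI
        · exact h
      -- b ≤ compl a : oplus b (compl c) = some (compl a)
      have hle : Q.oplus b (Q.compl c) = some (Q.compl a) := Q.oavi b a c (Q.comm a b c hc)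
      exact hdown (Q.compl a) hca b ⟨Q.compl c, hle⟩
    refine ⟨⟨fun a => ?_, ?_, ?_⟩, fun a => ?_⟩
    · by_cases h : a ∈ I <;> simp [h]
    · simp [honeI]
    · intro a b c hc
      by_cases haI : a ∈ I
      · by_cases hbI : b ∈ I
        · have hcI : c ∈ I := hsum a haI b hbI c hc
          simp [haI, hbI, hcI]
        · have hcI : c ∉ I := fun hcI =>
            hbI (hdown c hcI b ⟨a, Q.comm a b c hc⟩)
          simp [haI, hbI, hcI]
      · have hbI : b ∈ I := hkey a b c hc haI
        have hcI : c ∉ I := fun hcI =>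
          haI (hdown c hcI a ⟨b, hc⟩)
        simp [haI, hbI, hcI]
    · by_cases h : a ∈ I <;> simp [h]
  constructor
  · -- (3) round trip on states
    rintro s ⟨_, htv⟩
    funext a
    simp only [Set.mem_setOf_eq]
    rcases htv a with h | h
    · simp [h]
    · simp [h]
  · -- (4) round trip on ideals
    rintro I _
    ext a
    by_cases h : a ∈ I <;> simp [h]
end

section
/- Let {B_i : i ∈ I} be a Boolean atlas. Define L := ⋃_{i∈I} B_i, with 0 and 1 the common least and greatest elements, a' := a^{⊥_i} for any i with a ∈ B_i, and a partial operation ⊕ by: a⊕b is defined if and only if there is i ∈ I with a, b ∈ B_i and a ∧_i b = 0, in which case a⊕b := a ∨_i b. Then ⊕ and ' are well defined and (L, 0, 1, ⊕) is a quasi orthoalgebra. -/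
/-- A Boolean atlas: a family `{B_i : i ∈ ι}` of Boolean algebras (given by their
carriers inside an ambient type `α`, which may share elements, together with their
operations `le i`, `sup i`, `inf i`, `compl i` and common least and greatest elements
`bot`, `top`), each carrier being a Boolean algebra for its operations, and such that
the compatibility conditions (i)–(v) of a Boolean atlas hold. -/
structure BooleanAtlas (α : Type*) (ι : Type*) where
  carrier : ι → Set α
  le : ι → α → α → Prop
  sup : ι → α → α → α
  inf : ι → α → α → α
  compl : ι → α → α
  bot : α
  top : α
  bot_ne_top : bot ≠ top
  bot_mem : ∀ i, bot ∈ carrier i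
  top_mem : ∀ i, top ∈ carrier i
  sup_mem : ∀ i, ∀ a ∈ carrier i, ∀ b ∈ carrier i, sup i a b ∈ carrier i
  inf_mem : ∀ i, ∀ a ∈ carrier i, ∀ b ∈ carrier i, inf i a b ∈ carrier i
  compl_mem : ∀ i, ∀ a ∈ carrier i, compl i a ∈ carrier i
  -- each `B_i` is a Boolean algebra:
  le_refl : ∀ i, ∀ a ∈ carrier i, le i a a
  le_trans : ∀ i, ∀ a ∈ carrier i, ∀ b ∈ carrier i, ∀ c ∈ carrier i,
    le i a b → le i b c → le i a c
  le_antisymm : ∀ i, ∀ a ∈ carrier i, ∀ b ∈ carrier i, le i a b → le i b a → a = b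
  le_sup_left : ∀ i, ∀ a ∈ carrier i, ∀ b ∈ carrier i, le i a (sup i a b)
  le_sup_right : ∀ i, ∀ a ∈ carrier i, ∀ b ∈ carrier i, le i b (sup i a b)
  sup_le : ∀ i, ∀ a ∈ carrier i, ∀ b ∈ carrier i, ∀ c ∈ carrier i,
    le i a c → le i b c → le i (sup i a b) c
  inf_le_left : ∀ i, ∀ a ∈ carrier i, ∀ b ∈ carrier i, le i (inf i a b) a
  inf_le_right : ∀ i, ∀ a ∈ carrier i, ∀ b ∈ carrier i, le i (inf i a b) b
  le_inf : ∀ i, ∀ a ∈ carrier i, ∀ b ∈ carrier i, ∀ c ∈ carrier i,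
    le i c a → le i c b → le i c (inf i a b)
  bot_le : ∀ i, ∀ a ∈ carrier i, le i bot a
  le_top : ∀ i, ∀ a ∈ carrier i, le i a top
  inf_sup_distrib : ∀ i, ∀ a ∈ carrier i, ∀ b ∈ carrier i, ∀ c ∈ carrier i,
    inf i a (sup i b c) = sup i (inf i a b) (inf i a c)
  sup_compl : ∀ i, ∀ a ∈ carrier i, sup i a (compl i a) = top
  inf_compl : ∀ i, ∀ a ∈ carrier i, inf i a (compl i a) = bot
  -- the Boolean atlas axioms:
  /-- (i) `B_i ⊆ B_j` implies `B_i = B_j` -/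
  subset_eq : ∀ i j, carrier i ⊆ carrier j → carrier i = carrier j
  /-- (ii) the orders agree on intersections -/
  le_compat : ∀ i j, ∀ a ∈ carrier i ∩ carrier j, ∀ b ∈ carrier i ∩ carrier j,
    (le i a b ↔ le j a b)
  /-- (iv) the orthocomplementations agree on intersections -/
  compl_compat : ∀ i j, ∀ a ∈ carrier i ∩ carrier j, compl i a = compl j a
  /-- (v) joins of disjoint pairs agree on intersections -/
  sup_compat : ∀ i j, ∀ a ∈ carrier i ∩ carrier j, ∀ b ∈ carrier i ∩ carrier j,
    inf i a b = bot → sup i a b = sup j a b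

noncomputable section
namespace BooleanAtlas

variable {α ι : Type*} (A : BooleanAtlas α ι)
open scoped Classical

instance chartBA (i : ι) : BooleanAlgebra ↥(A.carrier i) :=
  letI lat : Lattice ↥(A.carrier i) :=
    { le := fun x y => A.le i x.1 y.1
      le_refl := fun x => A.le_refl i x.1 x.2
      le_trans := fun x y z h1 h2 => A.le_trans i x.1 x.2 y.1 y.2 z.1 z.2 h1 h2
      le_antisymm := fun x y h1 h2 => Subtype.ext (A.le_antisymm i x.1 x.2 y.1 y.2 h1 h2)
      sup := fun x y => ⟨A.sup i x.1 y.1, A.sup_mem i x.1 x.2 y.1 y.2⟩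
      le_sup_left := fun x y => A.le_sup_left i x.1 x.2 y.1 y.2
      le_sup_right := fun x y => A.le_sup_right i x.1 x.2 y.1 y.2
      sup_le := fun x y z h1 h2 => A.sup_le i x.1 x.2 y.1 y.2 z.1 z.2 h1 h2
      inf := fun x y => ⟨A.inf i x.1 y.1, A.inf_mem i x.1 x.2 y.1 y.2⟩
      inf_le_left := fun x y => A.inf_le_left i x.1 x.2 y.1 y.2
      inf_le_right := fun x y => A.inf_le_right i x.1 x.2 y.1 y.2
      le_inf := fun x y z h1 h2 => A.le_inf i y.1 y.2 z.1 z.2 x.1 x.2 h1 h2 }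
  letI dl : DistribLattice ↥(A.carrier i) :=
    DistribLattice.ofInfSupLe (fun x y z =>
      le_of_eq (Subtype.ext (A.inf_sup_distrib i x.1 x.2 y.1 y.2 z.1 z.2)))
  { dl with
    compl := fun x => ⟨A.compl i x.1, A.compl_mem i x.1 x.2⟩
    top := ⟨A.top, A.top_mem i⟩
    bot := ⟨A.bot, A.bot_mem i⟩
    le_top := fun x => A.le_top i x.1 x.2
    bot_le := fun x => A.bot_le i x.1 x.2
    inf_compl_le_bot := fun x => le_of_eq (Subtype.ext (A.inf_compl i x.1 x.2))
    top_le_sup_compl := fun x => ge_of_eq (Subtype.ext (A.sup_compl i x.1 x.2)) }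

@[simp] lemma val_sup {i : ι} (x y : A.carrier i) : ((x ⊔ y : A.carrier i) : α) = A.sup i x y := rfl
@[simp] lemma val_inf {i : ι} (x y : A.carrier i) : ((x ⊓ y : A.carrier i) : α) = A.inf i x y := rfl
@[simp] lemma val_compl {i : ι} (x : A.carrier i) : ((xᶜ : A.carrier i) : α) = A.compl i x := rfl
@[simp] lemma val_bot {i : ι} : ((⊥ : A.carrier i) : α) = A.bot := rfl
@[simp] lemma val_top {i : ι} : ((⊤ : A.carrier i) : α) = A.top := rfl
lemma le_def {i : ι} (x y : A.carrier i) : x ≤ y ↔ A.le i x.1 y.1 := Iff.rfl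

/-- disjointness is chart-independent. -/
lemma inf_eq_bot_compat {i j : ι} {a b : α} (hai : a ∈ A.carrier i) (haj : a ∈ A.carrier j)
    (hbi : b ∈ A.carrier i) (hbj : b ∈ A.carrier j) (h : A.inf i a b = A.bot) :
    A.inf j a b = A.bot := by
  have h1 : (⟨a, hai⟩ ⊓ ⟨b, hbi⟩ : A.carrier i) = ⊥ := Subtype.ext h
  have h2 : (⟨a, hai⟩ : A.carrier i) ≤ (⟨b, hbi⟩ : A.carrier i)ᶜ :=
    le_compl_iff_disjoint_right.2 (disjoint_iff.2 h1)
  have hc : A.compl i b = A.compl j b := A.compl_compat i j b ⟨hbi, hbj⟩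
  have hcm : A.compl i b ∈ A.carrier i ∩ A.carrier j :=
    ⟨A.compl_mem i b hbi, hc ▸ A.compl_mem j b hbj⟩
  have h3 : A.le j a (A.compl j b) := by
    have := (A.le_compat i j a ⟨hai, haj⟩ (A.compl i b) hcm).1 h2
    rwa [hc] at this
  have h4 : (⟨a, haj⟩ : A.carrier j) ≤ (⟨b, hbj⟩ : A.carrier j)ᶜ := h3
  have h5 : (⟨a, haj⟩ ⊓ ⟨b, hbj⟩ : A.carrier j) = ⊥ :=
    disjoint_iff.1 (le_compl_iff_disjoint_right.1 h4)
  exact congrArg Subtype.val h5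

lemma mem_of_compl_mem {i j : ι} {a : α} (haj : a ∈ A.carrier j)
    (h : A.compl j a ∈ A.carrier i) : a ∈ A.carrier i := by
  have h1 : A.compl i (A.compl j a) = A.compl j (A.compl j a) :=
    A.compl_compat i j _ ⟨h, A.compl_mem j a haj⟩
  have h2 : A.compl j (A.compl j a) = a :=
    congrArg Subtype.val (compl_compl (⟨a, haj⟩ : A.carrier j))
  have := A.compl_mem i _ h
  rwa [h1, h2] at this

/-- the carrier of the union quasi orthoalgebra. -/
abbrev Pt := {x : α // ∃ i, x ∈ A.carrier i}

def D (a b : A.Pt) : Prop :=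
  ∃ i, a.1 ∈ A.carrier i ∧ b.1 ∈ A.carrier i ∧ A.inf i a.1 b.1 = A.bot

def opl (a b : A.Pt) : Option A.Pt :=
  if h : A.D a b then
    some ⟨A.sup h.choose a.1 b.1,
      h.choose, A.sup_mem h.choose a.1 h.choose_spec.1 b.1 h.choose_spec.2.1⟩
  else none

lemma opl_isSome {a b : A.Pt} : (A.opl a b).isSome ↔ A.D a b := by
  unfold opl; split <;> simp_all

lemma opl_eq {a b : A.Pt} {i : ι} (hai : a.1 ∈ A.carrier i) (hbi : b.1 ∈ A.carrier i)
    (hinf : A.inf i a.1 b.1 = A.bot) :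
    A.opl a b = some ⟨A.sup i a.1 b.1, i, A.sup_mem i a.1 hai b.1 hbi⟩ := by
  have h : A.D a b := ⟨i, hai, hbi, hinf⟩
  unfold opl
  rw [dif_pos h]
  exact congrArg some (Subtype.ext (A.sup_compat h.choose i a.1 ⟨h.choose_spec.1, hai⟩ b.1
    ⟨h.choose_spec.2.1, hbi⟩ h.choose_spec.2.2))

lemma opl_val {a b c : A.Pt} (h : A.opl a b = some c) {i : ι} (hai : a.1 ∈ A.carrier i)
    (hbi : b.1 ∈ A.carrier i) (hinf : A.inf i a.1 b.1 = A.bot) :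
    c.1 = A.sup i a.1 b.1 := by
  rw [A.opl_eq hai hbi hinf] at h
  exact (congrArg Subtype.val (Option.some.inj h)).symm

def cmpl (a : A.Pt) : A.Pt :=
  ⟨A.compl a.2.choose a.1, a.2.choose, A.compl_mem a.2.choose a.1 a.2.choose_spec⟩

lemma cmpl_val (a : A.Pt) {i : ι} (hai : a.1 ∈ A.carrier i) :
    (A.cmpl a).1 = A.compl i a.1 :=
  A.compl_compat a.2.choose i a.1 ⟨a.2.choose_spec, hai⟩

end BooleanAtlas
end
/-- Every Boolean atlas defines a quasi orthoalgebra on `L = ⋃ i, B_i` in a natural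
way: `0 = bot`, `1 = top`, `a' = a^{⊥_i}` for any `i` with `a ∈ B_i` (well defined),
and `a ⊕ b` defined iff there is `i` with `a, b ∈ B_i` and `a ∧_i b = 0`, in which
case `a ⊕ b = a ∨_i b` (well defined). -/
theorem stmt8 {α ι : Type*} [Nonempty ι] (A : BooleanAtlas α ι) :
    ∃ Q : QuasiOrthoalgebra {x : α // ∃ i, x ∈ A.carrier i},
      (Q.zero : α) = A.bot ∧ (Q.one : α) = A.top ∧
      (∀ a : {x : α // ∃ i, x ∈ A.carrier i}, ∀ i, (a : α) ∈ A.carrier i →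
        (Q.compl a : α) = A.compl i a) ∧
      (∀ a b : {x : α // ∃ i, x ∈ A.carrier i},
        ((Q.oplus a b).isSome ↔
          ∃ i, (a : α) ∈ A.carrier i ∧ (b : α) ∈ A.carrier i ∧ A.inf i a b = A.bot)) ∧
      (∀ a b c : {x : α // ∃ i, x ∈ A.carrier i}, Q.oplus a b = some c →
        ∀ i, (a : α) ∈ A.carrier i → (b : α) ∈ A.carrier i → A.inf i a b = A.bot →
          (c : α) = A.sup i a b) := by
  classical
  obtain ⟨i0⟩ := ‹Nonempty ι›
  refine ⟨{ zero := ⟨A.bot, i0, A.bot_mem i0⟩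
            one := ⟨A.top, i0, A.top_mem i0⟩
            oplus := A.opl
            compl := A.cmpl
            zero_ne_one := fun h => A.bot_ne_top (congrArg Subtype.val h)
            comm := ?_
            oplus_zero := ?_
            compl_oplus := ?_
            compl_unique := ?_
            oaiv := ?_
            oav := ?_
            oavi := ?_ },
        rfl, rfl, fun a i h => A.cmpl_val a h, fun a b => A.opl_isSome,
        fun a b c h i hai hbi hinf => A.opl_val h hai hbi hinf⟩
  · -- comm
    intro a b c h
    obtain ⟨i, hai, hbi, hinf⟩ := A.opl_isSome.1 (by rw [h]; rfl)
    have hc : c.1 = A.sup i a.1 b.1 := A.opl_val h hai hbi hinf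
    have hinf' : A.inf i b.1 a.1 = A.bot := by
      have h2 : (⟨b.1, hbi⟩ ⊓ ⟨a.1, hai⟩ : A.carrier i) = ⊥ := by
        rw [inf_comm]; exact Subtype.ext hinf
      exact congrArg Subtype.val h2
    rw [A.opl_eq hbi hai hinf']
    refine congrArg some (Subtype.ext ?_)
    have hs : A.sup i b.1 a.1 = A.sup i a.1 b.1 :=
      congrArg Subtype.val (sup_comm (⟨b.1, hbi⟩ : A.carrier i) ⟨a.1, hai⟩)
    exact hs.trans hc.symm
  · -- oplus_zero
    intro a
    obtain ⟨i, hai⟩ := a.2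
    have hbm : A.bot ∈ A.carrier i := A.bot_mem i
    have hinf : A.inf i a.1 A.bot = A.bot :=
      congrArg Subtype.val (inf_bot_eq (⟨a.1, hai⟩ : A.carrier i))
    rw [A.opl_eq hai hbm hinf]
    have hv : A.sup i a.1 A.bot = a.1 :=
      congrArg Subtype.val (sup_bot_eq (⟨a.1, hai⟩ : A.carrier i))
    exact congrArg some (Subtype.ext hv)
  · -- compl_oplus
    intro a
    obtain hai := a.2.choose_spec
    set i := a.2.choose with hi
    have hmem : (A.cmpl a).1 ∈ A.carrier i := by
      rw [A.cmpl_val a hai]; exact A.compl_mem i a.1 hai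
    have hinf : A.inf i a.1 (A.cmpl a).1 = A.bot := by
      rw [A.cmpl_val a hai]; exact A.inf_compl i a.1 hai
    rw [A.opl_eq hai hmem hinf]
    refine congrArg some (Subtype.ext ?_)
    show A.sup i a.1 (A.cmpl a).1 = A.top
    rw [A.cmpl_val a hai]; exact A.sup_compl i a.1 hai
  · -- compl_unique
    intro a b h
    obtain ⟨i, hai, hbi, hinf⟩ := A.opl_isSome.1 (by rw [h]; rfl)
    have hsup : A.top = A.sup i a.1 b.1 := A.opl_val h hai hbi hinf
    have hic : IsCompl (⟨a.1, hai⟩ : A.carrier i) ⟨b.1, hbi⟩ :=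
      IsCompl.of_eq (Subtype.ext hinf) (Subtype.ext hsup.symm)
    have hce := hic.compl_eq
    refine Subtype.ext ?_
    rw [A.cmpl_val a hai]
    exact (congrArg Subtype.val hce).symm
  · -- oaiv
    intro a b c h1 h2
    obtain ⟨i, h₁, hbi, hinf1⟩ := A.opl_isSome.1 (by rw [h1]; rfl)
    have hai : a.1 ∈ A.carrier i := A.mem_of_compl_mem a.2.choose_spec h₁
    have hcvi : (A.cmpl a).1 = A.compl i a.1 := A.cmpl_val a hai
    have hcval : c.1 = A.sup i (A.cmpl a).1 b.1 := A.opl_val h1 h₁ hbi hinf1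
    have hci : c.1 ∈ A.carrier i := by
      rw [hcval]; exact A.sup_mem i _ h₁ _ hbi
    obtain ⟨j, haj, hcj, hinf2⟩ := A.opl_isSome.1 h2
    have hinf2' : A.inf i a.1 c.1 = A.bot := A.inf_eq_bot_compat haj hai hcj hci hinf2
    set x : A.carrier i := ⟨a.1, hai⟩ with hx
    set y : A.carrier i := ⟨b.1, hbi⟩ with hy
    set z : A.carrier i := ⟨c.1, hci⟩ with hzdef
    have hz : z = xᶜ ⊔ y := by
      refine Subtype.ext ?_
      show c.1 = A.sup i (A.compl i a.1) b.1
      rw [hcval, hcvi]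
    have hd1 : xᶜ ⊓ y = ⊥ := by
      refine Subtype.ext ?_
      show A.inf i (A.compl i a.1) b.1 = A.bot
      rw [← hcvi]; exact hinf1
    have hd2 : x ⊓ z = ⊥ := Subtype.ext hinf2'
    have hyz : y ≤ z := hz ▸ le_sup_right
    have hzx : z ≤ xᶜ := le_compl_iff_disjoint_right.2 (disjoint_iff.2 hd2).symm
    have hyx : y ≤ xᶜ := hyz.trans hzx
    have hyb : y = ⊥ := le_bot_iff.1 ((disjoint_iff.2 hd1).symm le_rfl hyx)
    have hv : b.1 = A.bot := Subtype.ext_iff.1 hyb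
    exact Subtype.ext hv
  · -- oav
    intro a b c h1 h2
    obtain ⟨i, hai, hbi, hinf1⟩ := A.opl_isSome.1 (by rw [h1]; rfl)
    have hcval : c.1 = A.sup i a.1 b.1 := A.opl_val h1 hai hbi hinf1
    have hci : c.1 ∈ A.carrier i := by
      rw [hcval]; exact A.sup_mem i _ hai _ hbi
    obtain ⟨j, haj, hcj, hinf2⟩ := A.opl_isSome.1 h2
    have hinf2' : A.inf i a.1 c.1 = A.bot := A.inf_eq_bot_compat haj hai hcj hci hinf2
    have hz : (⟨c.1, hci⟩ : A.carrier i) = ⟨a.1, hai⟩ ⊔ ⟨b.1, hbi⟩ := Subtype.ext hcval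
    have hxz : (⟨a.1, hai⟩ : A.carrier i) ≤ ⟨c.1, hci⟩ := hz ▸ le_sup_left
    have hd : Disjoint (⟨a.1, hai⟩ : A.carrier i) ⟨c.1, hci⟩ :=
      disjoint_iff.2 (Subtype.ext hinf2')
    have hab : (⟨a.1, hai⟩ : A.carrier i) = ⊥ := le_bot_iff.1 (hd le_rfl hxz)
    have hv : a.1 = A.bot := Subtype.ext_iff.1 hab
    exact Subtype.ext hv
  · -- oavi
    intro a b c h
    obtain ⟨i, hai, hbi, hinf⟩ := A.opl_isSome.1 (by rw [h]; rfl)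
    have hcval : c.1 = A.sup i a.1 b.1 := A.opl_val h hai hbi hinf
    have hci : c.1 ∈ A.carrier i := by
      rw [hcval]; exact A.sup_mem i _ hai _ hbi
    set x : A.carrier i := ⟨a.1, hai⟩ with hx
    set y : A.carrier i := ⟨b.1, hbi⟩ with hy
    set z : A.carrier i := ⟨c.1, hci⟩ with hzdef
    have hz : z = x ⊔ y := Subtype.ext hcval
    have hcc : (A.cmpl c).1 = A.compl i c.1 := A.cmpl_val c hci
    have hccm : (A.cmpl c).1 ∈ A.carrier i := by
      rw [hcc]; exact A.compl_mem i _ hci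
    have hdxy : Disjoint x y := disjoint_iff.2 (Subtype.ext hinf)
    have hdz : Disjoint x zᶜ := by
      have hxz : x ≤ z := hz ▸ le_sup_left
      exact disjoint_compl_right.mono_left hxz
    have hinf2 : A.inf i a.1 (A.cmpl c).1 = A.bot := by
      rw [hcc]; exact congrArg Subtype.val (disjoint_iff.1 hdz)
    rw [A.opl_eq hai hccm hinf2]
    refine congrArg some (Subtype.ext ?_)
    show A.sup i a.1 (A.cmpl c).1 = (A.cmpl b).1
    rw [hcc, A.cmpl_val b hbi]
    have key : x ⊔ zᶜ = yᶜ := by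
      rw [hz, compl_sup, sup_inf_left, sup_compl_eq_top, top_inf_eq]
      exact sup_eq_right.2 (le_compl_iff_disjoint_right.2 hdxy)
    exact congrArg Subtype.val key
end

section
/- Let Ω = {1,2,3,4,5,6}, let B₁ be the Boolean algebra of subsets of Ω generated by the partition {{1},{2},{3},{4},{5,6}}, and let B₂ be the Boolean algebra of subsets of Ω generated by the partition {{1},{2},{3,4},{5},{6}}. Let L = B₁ ∪ B₂ with 0 = ∅, 1 = Ω, A' = Ω ∖ A, and A⊕B defined iff A, B both lie in B₁ or both lie in B₂ and A ∩ B = ∅, in which case A⊕B = A ∪ B. Then L is a quasi orthoalgebra in which the induced relation ≤ (A ≤ B iff there is C with A⊕C = B) is not transitive: {3} ≤ {3,4} and {3,4} ≤ {3,4,5}, but not {3} ≤ {3,4,5}. In particular L is not an orthoalgebra. -/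
/-- An orthoalgebra: a quasi orthoalgebra additionally satisfying the associativity
law (oavii): if `a ⊕ b` and `(a ⊕ b) ⊕ c` are defined, then so are `b ⊕ c` and
`a ⊕ (b ⊕ c)`, and `(a ⊕ b) ⊕ c = a ⊕ (b ⊕ c)`. -/
structure Orthoalgebra (L : Type*) extends QuasiOrthoalgebra L where
  /-- (oavii) associativity -/
  assoc : ∀ a b c ab abc, oplus a b = some ab → oplus ab c = some abc →
    ∃ bc, oplus b c = some bc ∧ oplus a bc = some abc

/-- `Ω = {1,2,3,4,5,6}`. -/
def Omega : Set ℕ := {1, 2, 3, 4, 5, 6}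

/-- The partition `{{1},{2},{3},{4},{5,6}}` of `Ω`. -/
def P1 : Set (Set ℕ) := {{1}, {2}, {3}, {4}, {5, 6}}

/-- The partition `{{1},{2},{3,4},{5},{6}}` of `Ω`. -/
def P2 : Set (Set ℕ) := {{1}, {2}, {3, 4}, {5}, {6}}

/-- The Boolean algebra of subsets of `Ω` generated by a partition: all unions of
blocks of the partition. -/
def genBoolAlg (P : Set (Set ℕ)) : Set (Set ℕ) := {A | ∃ S ⊆ P, A = ⋃₀ S}


lemma gen_empty (P : Set (Set ℕ)) : (∅ : Set ℕ) ∈ genBoolAlg P := ⟨∅, by simp, by simp⟩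

lemma gen_omega {P : Set (Set ℕ)} (hP : ⋃₀ P = Omega) : Omega ∈ genBoolAlg P :=
  ⟨P, subset_rfl, hP.symm⟩

lemma gen_subset {P : Set (Set ℕ)} (hP : ⋃₀ P = Omega) {A : Set ℕ}
    (hA : A ∈ genBoolAlg P) : A ⊆ Omega := by
  obtain ⟨S, hS, rfl⟩ := hA
  rw [← hP]
  exact Set.sUnion_mono hS

lemma gen_union {P : Set (Set ℕ)} {A B : Set ℕ} (hA : A ∈ genBoolAlg P)
    (hB : B ∈ genBoolAlg P) : A ∪ B ∈ genBoolAlg P := by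
  obtain ⟨S, hS, rfl⟩ := hA
  obtain ⟨T, hT, rfl⟩ := hB
  exact ⟨S ∪ T, Set.union_subset hS hT, (Set.sUnion_union S T).symm⟩

lemma gen_compl {P : Set (Set ℕ)} (hP : ⋃₀ P = Omega)
    (hd : ∀ b ∈ P, ∀ b' ∈ P, b ≠ b' → b ∩ b' = ∅) {A : Set ℕ}
    (hA : A ∈ genBoolAlg P) : Omega \ A ∈ genBoolAlg P := by
  obtain ⟨S, hS, rfl⟩ := hA
  refine ⟨P \ S, Set.diff_subset, ?_⟩
  ext x
  constructor
  · rintro ⟨hxΩ, hxS⟩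
    rw [← hP] at hxΩ
    obtain ⟨b, hb, hxb⟩ := hxΩ
    exact ⟨b, ⟨hb, fun hbS => hxS ⟨b, hbS, hxb⟩⟩, hxb⟩
  · rintro ⟨b, ⟨hbP, hbS⟩, hxb⟩
    refine ⟨hP ▸ ⟨b, hbP, hxb⟩, ?_⟩
    rintro ⟨b', hb'S, hxb'⟩
    have hne : b ≠ b' := fun h => hbS (h ▸ hb'S)
    have hx : x ∈ b ∩ b' := ⟨hxb, hxb'⟩
    rw [hd b hbP b' (hS hb'S) hne] at hx
    exact hx

lemma P1cov : ⋃₀ P1 = Omega := by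
  ext x; simp [P1, Omega]; tauto

lemma P2cov : ⋃₀ P2 = Omega := by
  ext x; simp [P2, Omega]; tauto

lemma P1disj : ∀ b ∈ P1, ∀ b' ∈ P1, b ≠ b' → b ∩ b' = ∅ := by
  intro b hb b' hb' hne
  simp only [P1, Set.mem_insert_iff, Set.mem_singleton_iff] at hb hb'
  rcases hb with rfl | rfl | rfl | rfl | rfl <;> rcases hb' with rfl | rfl | rfl | rfl | rfl <;>
    first
      | exact absurd rfl hne
      | (ext t; simp)

lemma P2disj : ∀ b ∈ P2, ∀ b' ∈ P2, b ≠ b' → b ∩ b' = ∅ := by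
  intro b hb b' hb' hne
  simp only [P2, Set.mem_insert_iff, Set.mem_singleton_iff] at hb hb'
  rcases hb with rfl | rfl | rfl | rfl | rfl <;> rcases hb' with rfl | rfl | rfl | rfl | rfl <;>
    first
      | exact absurd rfl hne
      | (ext t; simp)

lemma mem3B1 : ({3} : Set ℕ) ∈ genBoolAlg P1 := ⟨{{3}}, by simp [P1], by simp⟩
lemma mem4B1 : ({4} : Set ℕ) ∈ genBoolAlg P1 := ⟨{{4}}, by simp [P1], by simp⟩
lemma mem34B1 : ({3, 4} : Set ℕ) ∈ genBoolAlg P1 := by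
  have := gen_union mem3B1 mem4B1
  convert this using 1
  all_goals ext t; simp; try tauto
lemma mem34B2 : ({3, 4} : Set ℕ) ∈ genBoolAlg P2 := ⟨{{3, 4}}, by simp [P2], by simp⟩
lemma mem5B2 : ({5} : Set ℕ) ∈ genBoolAlg P2 := ⟨{{5}}, by simp [P2], by simp⟩
lemma mem345B2 : ({3, 4, 5} : Set ℕ) ∈ genBoolAlg P2 := by
  have := gen_union mem34B2 mem5B2
  convert this using 1
  all_goals ext t; simp; try tauto

lemma notmem45B1 : ({4, 5} : Set ℕ) ∉ genBoolAlg P1 := by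
  rintro ⟨S, hS, hA⟩
  have h5 : (5 : ℕ) ∈ ⋃₀ S := hA ▸ (by simp)
  obtain ⟨b, hbS, h5b⟩ := h5
  have hb := hS hbS
  simp only [P1, Set.mem_insert_iff, Set.mem_singleton_iff] at hb
  rcases hb with rfl | rfl | rfl | rfl | rfl <;> simp at h5b
  have h6 : (6 : ℕ) ∈ ⋃₀ S := ⟨{5, 6}, hbS, by simp⟩
  rw [← hA] at h6
  simp at h6

lemma notmem45B2 : ({4, 5} : Set ℕ) ∉ genBoolAlg P2 := by
  rintro ⟨S, hS, hA⟩
  have h4 : (4 : ℕ) ∈ ⋃₀ S := hA ▸ (by simp)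
  obtain ⟨b, hbS, h4b⟩ := h4
  have hb := hS hbS
  simp only [P2, Set.mem_insert_iff, Set.mem_singleton_iff] at hb
  rcases hb with rfl | rfl | rfl | rfl | rfl <;> simp at h4b
  have h3 : (3 : ℕ) ∈ ⋃₀ S := ⟨{3, 4}, hbS, by simp⟩
  rw [← hA] at h3
  simp at h3


abbrev Lcar := ↥(genBoolAlg P1 ∪ genBoolAlg P2)

lemma elt_subset (a : Lcar) : (a : Set ℕ) ⊆ Omega := by
  rcases a.2 with h | h
  · exact gen_subset P1cov h
  · exact gen_subset P2cov h

open Classical in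
noncomputable def myOplus (a b : Lcar) : Option Lcar :=
  if h : (((a : Set ℕ) ∈ genBoolAlg P1 ∧ (b : Set ℕ) ∈ genBoolAlg P1) ∨
      ((a : Set ℕ) ∈ genBoolAlg P2 ∧ (b : Set ℕ) ∈ genBoolAlg P2)) ∧
      (a : Set ℕ) ∩ (b : Set ℕ) = ∅ then
    some ⟨(a : Set ℕ) ∪ (b : Set ℕ), by
      rcases h.1 with ⟨h1, h2⟩ | ⟨h1, h2⟩
      · exact Or.inl (gen_union h1 h2)
      · exact Or.inr (gen_union h1 h2)⟩
  else none

lemma myOplus_iff (a b c : Lcar) :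
    myOplus a b = some c ↔
      (((a : Set ℕ) ∈ genBoolAlg P1 ∧ (b : Set ℕ) ∈ genBoolAlg P1) ∨
        ((a : Set ℕ) ∈ genBoolAlg P2 ∧ (b : Set ℕ) ∈ genBoolAlg P2)) ∧
      (a : Set ℕ) ∩ (b : Set ℕ) = ∅ ∧ (c : Set ℕ) = (a : Set ℕ) ∪ (b : Set ℕ) := by
  unfold myOplus
  split_ifs with h
  · simp only [Option.some_inj, Subtype.ext_iff]
    constructor
    · intro hc; exact ⟨h.1, h.2, hc.symm⟩
    · rintro ⟨_, _, hc⟩; exact hc.symm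
  · simp only [false_iff, reduceCtorEq]
    tauto

def myCompl (a : Lcar) : Lcar := ⟨Omega \ (a : Set ℕ), by
  rcases a.2 with h | h
  · exact Or.inl (gen_compl P1cov P1disj h)
  · exact Or.inr (gen_compl P2cov P2disj h)⟩

noncomputable def myQ : QuasiOrthoalgebra Lcar where
  zero := ⟨∅, Or.inl (gen_empty P1)⟩
  one := ⟨Omega, Or.inl (gen_omega P1cov)⟩
  oplus := myOplus
  compl := myCompl
  zero_ne_one := by
    intro h
    have h' : (∅ : Set ℕ) = Omega := congrArg Subtype.val h
    have : (1 : ℕ) ∈ (∅ : Set ℕ) := h' ▸ (by simp [Omega])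
    exact this
  comm := by
    intro a b c h
    rw [myOplus_iff] at h ⊢
    obtain ⟨hmem, hdis, hc⟩ := h
    exact ⟨by tauto, by rw [Set.inter_comm]; exact hdis, by rw [hc, Set.union_comm]⟩
  oplus_zero := by
    intro a
    rw [myOplus_iff]
    refine ⟨?_, by simp, by simp⟩
    rcases a.2 with h | h
    · exact Or.inl ⟨h, gen_empty P1⟩
    · exact Or.inr ⟨h, gen_empty P2⟩
  compl_oplus := by
    intro a
    rw [myOplus_iff]
    refine ⟨?_, ?_, ?_⟩
    · rcases a.2 with h | h
      · exact Or.inl ⟨h, gen_compl P1cov P1disj h⟩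
      · exact Or.inr ⟨h, gen_compl P2cov P2disj h⟩
    · simp [myCompl]
    · simp only [myCompl]
      rw [Set.union_diff_cancel' subset_rfl (elt_subset a)]
  compl_unique := by
    intro a b h
    rw [myOplus_iff] at h
    obtain ⟨_, hdis, hone⟩ := h
    apply Subtype.ext
    show (b : Set ℕ) = Omega \ (a : Set ℕ)
    ext x
    constructor
    · intro hx
      refine ⟨elt_subset b hx, fun hxa => ?_⟩
      have : x ∈ (a : Set ℕ) ∩ (b : Set ℕ) := ⟨hxa, hx⟩
      rw [hdis] at this; exact this
    · rintro ⟨hxΩ, hxa⟩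
      have : x ∈ (a : Set ℕ) ∪ (b : Set ℕ) := hone ▸ hxΩ
      exact this.resolve_left hxa
  oaiv := by
    intro a b c h1 h2
    rw [Option.isSome_iff_exists] at h2
    obtain ⟨d, h2⟩ := h2
    rw [myOplus_iff] at h1 h2
    obtain ⟨_, hdis1, hc⟩ := h1
    obtain ⟨_, hdis2, _⟩ := h2
    apply Subtype.ext
    show (b : Set ℕ) = ∅
    ext x
    simp only [Set.mem_empty_iff_false, iff_false]
    intro hxb
    have hxc : x ∈ (c : Set ℕ) := hc ▸ Or.inr hxb
    have hxna : x ∉ (a : Set ℕ) := fun hxa => by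
      have : x ∈ (a : Set ℕ) ∩ (c : Set ℕ) := ⟨hxa, hxc⟩
      rw [hdis2] at this; exact this
    have hxΩ : x ∈ Omega := elt_subset b hxb
    have : x ∈ (myCompl a : Set ℕ) ∩ (b : Set ℕ) := ⟨⟨hxΩ, hxna⟩, hxb⟩
    rw [hdis1] at this; exact this
  oav := by
    intro a b c h1 h2
    rw [Option.isSome_iff_exists] at h2
    obtain ⟨d, h2⟩ := h2
    rw [myOplus_iff] at h1 h2
    obtain ⟨_, _, hc⟩ := h1
    obtain ⟨_, hdis2, _⟩ := h2
    apply Subtype.ext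
    show (a : Set ℕ) = ∅
    ext x
    simp only [Set.mem_empty_iff_false, iff_false]
    intro hxa
    have : x ∈ (a : Set ℕ) ∩ (c : Set ℕ) := ⟨hxa, hc ▸ Or.inl hxa⟩
    rw [hdis2] at this; exact this
  oavi := by
    intro a b c h
    rw [myOplus_iff] at h ⊢
    obtain ⟨hmem, hdis, hc⟩ := h
    have haΩ : (a : Set ℕ) ⊆ Omega := elt_subset a
    have hbΩ : (b : Set ℕ) ⊆ Omega := elt_subset b
    refine ⟨?_, ?_, ?_⟩
    · rcases hmem with ⟨ha, hb⟩ | ⟨ha, hb⟩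
      · refine Or.inl ⟨ha, ?_⟩
        show Omega \ (c : Set ℕ) ∈ genBoolAlg P1
        have : (c : Set ℕ) ∈ genBoolAlg P1 := hc ▸ gen_union ha hb
        exact gen_compl P1cov P1disj this
      · refine Or.inr ⟨ha, ?_⟩
        show Omega \ (c : Set ℕ) ∈ genBoolAlg P2
        have : (c : Set ℕ) ∈ genBoolAlg P2 := hc ▸ gen_union ha hb
        exact gen_compl P2cov P2disj this
    · show (a : Set ℕ) ∩ (Omega \ (c : Set ℕ)) = ∅
      ext x
      simp only [Set.mem_inter_iff, Set.mem_diff, Set.mem_empty_iff_false, iff_false]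
      rintro ⟨hxa, _, hxc⟩
      exact hxc (hc ▸ Or.inl hxa)
    · show Omega \ (b : Set ℕ) = (a : Set ℕ) ∪ (Omega \ (c : Set ℕ))
      ext x
      constructor
      · rintro ⟨hxΩ, hxb⟩
        by_cases hxa : x ∈ (a : Set ℕ)
        · exact Or.inl hxa
        · refine Or.inr ⟨hxΩ, fun hxc => ?_⟩
          rw [hc] at hxc
          exact hxc.elim hxa hxb
      · rintro (hxa | ⟨hxΩ, hxc⟩)
        · refine ⟨haΩ hxa, fun hxb => ?_⟩
          have : x ∈ (a : Set ℕ) ∩ (b : Set ℕ) := ⟨hxa, hxb⟩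
          rw [hdis] at this; exact this
        · exact ⟨hxΩ, fun hxb => hxc (hc ▸ Or.inr hxb)⟩

lemma ortho_trans {L : Type*} (O : Orthoalgebra L) {x y z : L}
    (h1 : O.toQuasiOrthoalgebra.Le x y) (h2 : O.toQuasiOrthoalgebra.Le y z) :
    O.toQuasiOrthoalgebra.Le x z := by
  obtain ⟨c1, h1⟩ := h1
  obtain ⟨c2, h2⟩ := h2
  obtain ⟨bc, _, h⟩ := O.assoc x c1 c2 y z h1 h2
  exact ⟨bc, h⟩

def eX : Lcar := ⟨{3}, Or.inl mem3B1⟩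
def eY : Lcar := ⟨{3, 4}, Or.inl mem34B1⟩
def eZ : Lcar := ⟨{3, 4, 5}, Or.inr mem345B2⟩

lemma le_xy : myQ.Le eX eY := by
  refine ⟨⟨{4}, Or.inl mem4B1⟩, ?_⟩
  show myOplus _ _ = _
  rw [myOplus_iff]
  refine ⟨Or.inl ⟨mem3B1, mem4B1⟩, ?_, ?_⟩
  · show ({3} : Set ℕ) ∩ {4} = ∅
    ext t; simp
  · show ({3, 4} : Set ℕ) = {3} ∪ {4}
    ext t; simp; try tauto

lemma le_yz : myQ.Le eY eZ := by
  refine ⟨⟨{5}, Or.inr mem5B2⟩, ?_⟩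
  show myOplus _ _ = _
  rw [myOplus_iff]
  refine ⟨Or.inr ⟨mem34B2, mem5B2⟩, ?_, ?_⟩
  · show ({3, 4} : Set ℕ) ∩ {5} = ∅
    ext t; simp
  · show ({3, 4, 5} : Set ℕ) = {3, 4} ∪ {5}
    ext t; simp; try tauto

lemma not_le_xz : ¬ myQ.Le eX eZ := by
  rintro ⟨c, hc⟩
  have hc' : myOplus eX c = some eZ := hc
  rw [myOplus_iff] at hc'
  obtain ⟨hmem, hdis, hz⟩ := hc'
  have hz' : ({3, 4, 5} : Set ℕ) = {3} ∪ (c : Set ℕ) := hz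
  have hd' : ({3} : Set ℕ) ∩ (c : Set ℕ) = ∅ := hdis
  have hcv : (c : Set ℕ) = {4, 5} := by
    ext t
    constructor
    · intro ht
      have h1 : t ∈ ({3, 4, 5} : Set ℕ) := by rw [hz']; exact Or.inr ht
      have h2 : t ≠ 3 := by
        rintro rfl
        have : (3 : ℕ) ∈ ({3} : Set ℕ) ∩ (c : Set ℕ) := ⟨rfl, ht⟩
        rw [hd'] at this; exact this
      simp only [Set.mem_insert_iff, Set.mem_singleton_iff] at h1 ⊢
      tauto
    · intro ht
      simp only [Set.mem_insert_iff, Set.mem_singleton_iff] at ht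
      have h4 : ∀ u : ℕ, u ∈ ({3, 4, 5} : Set ℕ) → u ≠ 3 → u ∈ (c : Set ℕ) := by
        intro u hu hne
        rw [hz'] at hu
        rcases hu with h | h
        · exact absurd h hne
        · exact h
      rcases ht with rfl | rfl
      · exact h4 4 (by simp) (by omega)
      · exact h4 5 (by simp) (by omega)
  rcases hmem with ⟨_, hB⟩ | ⟨_, hB⟩
  · rw [hcv] at hB; exact notmem45B1 hB
  · rw [hcv] at hB; exact notmem45B2 hB


/-- On `L = B₁ ∪ B₂` (`B₁`, `B₂` generated by the partitions `P1`, `P2` of `Ω`),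
with `0 = ∅`, `1 = Ω`, `A' = Ω \ A`, and `A ⊕ B` defined iff `A, B` both lie in `B₁`
or both lie in `B₂` and `A ∩ B = ∅`, in which case `A ⊕ B = A ∪ B`, one obtains a
quasi orthoalgebra whose induced relation `≤` is not transitive
(`{3} ≤ {3,4}` and `{3,4} ≤ {3,4,5}` but not `{3} ≤ {3,4,5}`); in particular this
quasi orthoalgebra does not come from any orthoalgebra. -/
theorem stmt10 :
    ∃ Q : QuasiOrthoalgebra ↥(genBoolAlg P1 ∪ genBoolAlg P2),
      (Q.zero : Set ℕ) = ∅ ∧ (Q.one : Set ℕ) = Omega ∧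
      (∀ a : ↥(genBoolAlg P1 ∪ genBoolAlg P2), (Q.compl a : Set ℕ) = Omega \ a) ∧
      (∀ a b c : ↥(genBoolAlg P1 ∪ genBoolAlg P2),
        Q.oplus a b = some c ↔
          (((a : Set ℕ) ∈ genBoolAlg P1 ∧ (b : Set ℕ) ∈ genBoolAlg P1) ∨
            ((a : Set ℕ) ∈ genBoolAlg P2 ∧ (b : Set ℕ) ∈ genBoolAlg P2)) ∧
          (a : Set ℕ) ∩ (b : Set ℕ) = ∅ ∧ (c : Set ℕ) = (a : Set ℕ) ∪ (b : Set ℕ)) ∧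
      (∃ x y z : ↥(genBoolAlg P1 ∪ genBoolAlg P2),
        (x : Set ℕ) = {3} ∧ (y : Set ℕ) = {3, 4} ∧ (z : Set ℕ) = {3, 4, 5} ∧
        Q.Le x y ∧ Q.Le y z ∧ ¬ Q.Le x z) ∧
      ∀ O : Orthoalgebra ↥(genBoolAlg P1 ∪ genBoolAlg P2),
        O.toQuasiOrthoalgebra ≠ Q := by
  refine ⟨myQ, rfl, rfl, fun a => rfl, myOplus_iff,
    ⟨eX, eY, eZ, rfl, rfl, rfl, le_xy, le_yz, not_le_xz⟩, ?_⟩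
  intro O hO
  have hle := ortho_trans O (x := eX) (y := eY) (z := eZ)
  rw [hO] at hle
  exact not_le_xz (hle le_xy le_yz)
end

section
/- A prime orthoalgebra has unique Mackey decompositions: if L is a prime orthoalgebra, a, b ∈ L, and {a₁, b₁, c₁} and {a₂, b₂, c₂} are two jointly orthogonal triples with a = a₁⊕c₁ = a₂⊕c₂ and b = b₁⊕c₁ = b₂⊕c₂, then a₁ = a₂, b₁ = b₂ and c₁ = c₂. -/
namespace QuasiOrthoalgebra

variable {L : Type*} (Q : QuasiOrthoalgebra L)

/-- `L` is prime: its two-valued probability measures separate `L`. -/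
def IsPrimeSep : Prop :=
  ∀ a b : L, a ≠ b → ∃ s : L → ℝ, Q.IsTwoValuedState s ∧ s a ≠ s b

/-- A jointly orthogonal triple: all the sums `a ⊕ b`, `a ⊕ c`, `b ⊕ c` and
`a ⊕ b ⊕ c` are defined. -/
def JointlyOrth (a b c : L) : Prop :=
  (Q.oplus a c).isSome ∧ (Q.oplus b c).isSome ∧
    ∃ d, Q.oplus a b = some d ∧ (Q.oplus d c).isSome

end QuasiOrthoalgebra

/-- A prime orthoalgebra has unique Mackey decompositions: if `{a₁, b₁, c₁}` and
`{a₂, b₂, c₂}` are jointly orthogonal triples with `a = a₁ ⊕ c₁ = a₂ ⊕ c₂` and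
`b = b₁ ⊕ c₁ = b₂ ⊕ c₂`, then `a₁ = a₂`, `b₁ = b₂` and `c₁ = c₂`. -/
theorem stmt14 {L : Type*} (O : Orthoalgebra L)
    (hprime : O.toQuasiOrthoalgebra.IsPrimeSep)
    (a b a₁ b₁ c₁ a₂ b₂ c₂ : L)
    (h₁ : O.toQuasiOrthoalgebra.JointlyOrth a₁ b₁ c₁)
    (h₂ : O.toQuasiOrthoalgebra.JointlyOrth a₂ b₂ c₂)
    (ha₁ : O.oplus a₁ c₁ = some a) (ha₂ : O.oplus a₂ c₂ = some a)
    (hb₁ : O.oplus b₁ c₁ = some b) (hb₂ : O.oplus b₂ c₂ = some b) :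
    a₁ = a₂ ∧ b₁ = b₂ ∧ c₁ = c₂ := by

  have key : ∀ (s : L → ℝ), O.toQuasiOrthoalgebra.IsState s →
      ∀ x y z, O.toQuasiOrthoalgebra.JointlyOrth x y z → s x + s y + s z ≤ 1 := by
    rintro s ⟨hbd, h1, hadd⟩ x y z ⟨_, _, d, hd, hdz⟩
    obtain ⟨e, he⟩ := Option.isSome_iff_exists.mp hdz
    have hse := hadd d z e he
    have hsd := hadd x y d hd
    linarith [(hbd e).2]
  have aux : ∀ s, O.toQuasiOrthoalgebra.IsTwoValuedState s →
      ∀ x₁ y₁ z₁ x₂ y₂ z₂, O.toQuasiOrthoalgebra.JointlyOrth x₁ y₁ z₁ →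
      O.toQuasiOrthoalgebra.JointlyOrth x₂ y₂ z₂ →
      O.oplus x₁ z₁ = some a → O.oplus x₂ z₂ = some a →
      O.oplus y₁ z₁ = some b → O.oplus y₂ z₂ = some b →
      s z₁ = 1 → s z₂ = 0 → False := by
    rintro s ⟨⟨hbd, h1, hadd⟩, htv⟩ x₁ y₁ z₁ x₂ y₂ z₂ j₁ j₂ hx₁ hx₂ hy₁ hy₂ hz₁ hz₂
    have k1 := key s ⟨hbd, h1, hadd⟩ _ _ _ j₁
    have k2 := key s ⟨hbd, h1, hadd⟩ _ _ _ j₂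
    have ea1 := hadd _ _ _ hx₁
    have ea2 := hadd _ _ _ hx₂
    have eb1 := hadd _ _ _ hy₁
    have eb2 := hadd _ _ _ hy₂
    linarith [(hbd x₁).1, (hbd y₁).1, (hbd x₂).1, (hbd y₂).1]
  have sc : ∀ s, O.toQuasiOrthoalgebra.IsTwoValuedState s → s c₁ = s c₂ := by
    intro s hs
    rcases hs.2 c₁ with hc1 | hc1 <;> rcases hs.2 c₂ with hc2 | hc2
    · rw [hc1, hc2]
    · exact (aux s hs a₂ b₂ c₂ a₁ b₁ c₁ h₂ h₁ ha₂ ha₁ hb₂ hb₁ hc2 hc1).elim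
    · exact (aux s hs a₁ b₁ c₁ a₂ b₂ c₂ h₁ h₂ ha₁ ha₂ hb₁ hb₂ hc1 hc2).elim
    · rw [hc1, hc2]
  have hc : c₁ = c₂ := by
    by_contra h
    obtain ⟨s, hs, hne⟩ := hprime c₁ c₂ h
    exact hne (sc s hs)
  refine ⟨?_, ?_, hc⟩
  · by_contra h
    obtain ⟨s, hs, hne⟩ := hprime a₁ a₂ h
    have hcc := sc s hs
    obtain ⟨⟨_, _, hadd⟩, _⟩ := hs
    have e1 := hadd _ _ _ ha₁
    have e2 := hadd _ _ _ ha₂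
    apply hne; linarith
  · by_contra h
    obtain ⟨s, hs, hne⟩ := hprime b₁ b₂ h
    have hcc := sc s hs
    obtain ⟨⟨_, _, hadd⟩, _⟩ := hs
    have e1 := hadd _ _ _ hb₁
    have e2 := hadd _ _ _ hb₂
    apply hne; linarith
end

section
/- Let (Y, 𝒯) be a partition test space of a set X such that every partition of X consisting of elements of Y belongs to 𝒯 (a complete partition test space). Then (Y, 𝒯) is algebraic: if E, F, G, H are events with E and F perspective with axis G (E ∩ G = ∅, E ∪ G ∈ 𝒯, F ∩ G = ∅, F ∪ G ∈ 𝒯) and H a local complement of F (F ∩ H = ∅, F ∪ H ∈ 𝒯), then H is a local complement of E, i.e., E ∩ H = ∅ and E ∪ H ∈ 𝒯. -/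
/-- A partition of `X`: a family of pairwise disjoint nonempty subsets of `X`
whose union is `X`. -/
def IsPartitionOf {X : Type*} (T : Set (Set X)) : Prop :=
  (∀ t ∈ T, t.Nonempty) ∧ (∀ t ∈ T, ∀ s ∈ T, t ≠ s → t ∩ s = ∅) ∧ ⋃₀ T = Set.univ

/-- If `A ∪ B` is a partition with `A ∩ B = ∅`, then `⋃₀ A` is the complement of `⋃₀ B`. -/
lemma sUnion_compl_of_partition {X : Type*} {A B : Set (Set X)}
    (hAB : A ∩ B = ∅) (hpart : IsPartitionOf (A ∪ B)) : ⋃₀ A = (⋃₀ B)ᶜ := by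
  obtain ⟨hne, hdisj, huniv⟩ := hpart
  ext x
  constructor
  · rintro ⟨t, htA, hxt⟩ ⟨s, hsB, hxs⟩
    have hts : t ≠ s := by
      rintro rfl
      exact absurd (Set.mem_inter htA hsB) (by simp [hAB])
    have := hdisj t (Or.inl htA) s (Or.inr hsB) hts
    exact absurd (Set.mem_inter hxt hxs) (by simp [this])
  · intro hx
    have : x ∈ ⋃₀ (A ∪ B) := by rw [huniv]; trivial
    obtain ⟨t, ht, hxt⟩ := this
    rcases ht with h | h
    · exact ⟨t, h, hxt⟩
    · exact absurd ⟨t, h, hxt⟩ hx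

/-- A complete partition test space (every partition of `X` consisting of elements of
`Y` is a test) is algebraic: if `E` and `F` are perspective with axis `G` and `H` is a
local complement of `F`, then `H` is a local complement of `E`. -/
theorem stmt17 {X : Type*} [Nonempty X] (Y : Set (Set X)) (T : Set (Set (Set X)))
    (hY : Y.Nonempty) (hTY : ∀ t ∈ T, t ⊆ Y) (hTpart : ∀ t ∈ T, IsPartitionOf t)
    (hcov : ∀ y ∈ Y, ∃ t ∈ T, y ∈ t)
    (hcomplete : ∀ P : Set (Set X), P ⊆ Y → IsPartitionOf P → P ∈ T)
    (E F G H : Set (Set X))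
    (hEG : E ∩ G = ∅) (hEGT : E ∪ G ∈ T)
    (hFG : F ∩ G = ∅) (hFGT : F ∪ G ∈ T)
    (hFH : F ∩ H = ∅) (hFHT : F ∪ H ∈ T) :
    E ∩ H = ∅ ∧ E ∪ H ∈ T := by
  have hPE := hTpart _ hEGT
  have hPF := hTpart _ hFGT
  have hPH := hTpart _ hFHT
  have hUE : ⋃₀ E = (⋃₀ G)ᶜ := sUnion_compl_of_partition hEG hPE
  have hUF : ⋃₀ F = (⋃₀ G)ᶜ := sUnion_compl_of_partition hFG hPF
  have hUH : ⋃₀ H = (⋃₀ F)ᶜ := by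
    have := sUnion_compl_of_partition (by rw [Set.inter_comm]; exact hFH)
      (by rwa [Set.union_comm] at hPH)
    exact this
  have hEH : ⋃₀ E ∩ ⋃₀ H = ∅ := by
    rw [hUE, hUH, hUF]
    simp
  -- disjointness of the families
  have hEHfam : E ∩ H = ∅ := by
    ext t
    simp only [Set.mem_inter_iff, Set.mem_empty_iff_false, iff_false, not_and]
    intro htE htH
    have hnt : t.Nonempty := hPE.1 t (Or.inl htE)
    obtain ⟨x, hx⟩ := hnt
    have : x ∈ ⋃₀ E ∩ ⋃₀ H := ⟨⟨t, htE, hx⟩, ⟨t, htH, hx⟩⟩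
    rw [hEH] at this
    exact this
  refine ⟨hEHfam, ?_⟩
  apply hcomplete
  · intro t ht
    rcases ht with h | h
    · exact hTY _ hEGT (Or.inl h)
    · exact hTY _ hFHT (Or.inr h)
  · refine ⟨?_, ?_, ?_⟩
    · intro t ht
      rcases ht with h | h
      · exact hPE.1 t (Or.inl h)
      · exact hPH.1 t (Or.inr h)
    · intro t ht s hs hts
      have key : ∀ u ∈ E, ∀ v ∈ H, u ∩ v = ∅ := by
        intro u hu v hv
        ext x
        simp only [Set.mem_inter_iff, Set.mem_empty_iff_false, iff_false, not_and]
        intro hxu hxv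
        have : x ∈ ⋃₀ E ∩ ⋃₀ H := ⟨⟨u, hu, hxu⟩, ⟨v, hv, hxv⟩⟩
        rw [hEH] at this
        exact this
      rcases ht with h | h <;> rcases hs with h' | h'
      · exact hPE.2.1 t (Or.inl h) s (Or.inl h') hts
      · exact key t h s h'
      · rw [Set.inter_comm]; exact key s h' t h
      · exact hPH.2.1 t (Or.inr h) s (Or.inr h') hts
    · rw [Set.sUnion_union, hUE, hUH, hUF]
      simp
end

section
/- Let (X, 𝒯) be a test space possessing a separating family Δ of two-valued weights. For x ∈ X define φ(x) := {ω ∈ Δ : ω(x) = 1} ⊆ Δ, and for T ∈ 𝒯 define φ(T) := {φ(x) : x ∈ T}. Then φ is injective on X, and for every T ∈ 𝒯 the sets φ(x), x ∈ T, are pairwise disjoint and their union is Δ. Hence (φ(X), {φ(T) : T ∈ 𝒯}) is a partition test space of Δ, isomorphic to (X, 𝒯) via φ. -/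
/-- A two-valued weight on a test space `(X, 𝒯)`: a map `ω : X → {0,1} ⊆ ℝ` such
that every test contains exactly one point of weight `1`. -/
def IsTVWeight {X : Type*} (T : Set (Set X)) (ω : X → ℝ) : Prop :=
  (∀ x : X, ω x = 0 ∨ ω x = 1) ∧ ∀ t ∈ T, ∃! x : X, x ∈ t ∧ ω x = 1

/-- Let `(X, 𝒯)` be a test space with a separating family `Δ` of two-valued weights,
and let `φ x = {ω ∈ Δ : ω x = 1}`. Then `φ` is injective, for every test `t` the sets
`φ x`, `x ∈ t`, are pairwise disjoint with union `Δ`, and every element of `φ(X)`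
lies in some member of `φ(𝒯)`; hence `(φ(X), φ(𝒯))` is a partition test space of
`Δ`, isomorphic to `(X, 𝒯)` via `φ`. -/
theorem stmt19 {X : Type*} (T : Set (Set X)) (hT : T.Nonempty)
    (hcov : ∀ x : X, ∃ t ∈ T, x ∈ t)
    (hinc : ∀ t₁ ∈ T, ∀ t₂ ∈ T, t₁ ⊆ t₂ → t₁ = t₂)
    (Δ : Set (X → ℝ)) (hΔ : ∀ ω ∈ Δ, IsTVWeight T ω)
    (hsep : ∀ x₁ x₂ : X, x₁ ≠ x₂ → ∃ ω ∈ Δ, ω x₁ ≠ ω x₂) :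
    Function.Injective (fun x : X => {ω ∈ Δ | ω x = 1}) ∧
    (∀ t ∈ T, ∀ x₁ ∈ t, ∀ x₂ ∈ t, x₁ ≠ x₂ →
      {ω ∈ Δ | ω x₁ = 1} ∩ {ω ∈ Δ | ω x₂ = 1} = ∅) ∧
    (∀ t ∈ T, ⋃ x ∈ t, {ω ∈ Δ | ω x = 1} = Δ) ∧
    ∀ z ∈ (fun x : X => {ω ∈ Δ | ω x = 1}) '' Set.univ,
      ∃ s ∈ Set.image (fun x : X => {ω ∈ Δ | ω x = 1}) '' T, z ∈ s := by
  refine ⟨?_, ?_, ?_, ?_⟩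
  · intro x₁ x₂ h
    by_contra hne
    obtain ⟨ω, hω, hne'⟩ := hsep x₁ x₂ hne
    have h1 := (hΔ ω hω).1 x₁
    have h2 := (hΔ ω hω).1 x₂
    have h := Set.ext_iff.mp h ω
    simp only [Set.mem_setOf_eq, hω, true_and] at h
    rcases h1 with h1 | h1 <;> rcases h2 with h2 | h2 <;>
      simp [h1, h2] at h hne' <;> exact hne' (h1.trans h2.symm)
  · intro t ht x₁ hx₁ x₂ hx₂ hne
    ext ω
    simp only [Set.mem_inter_iff, Set.mem_setOf_eq, Set.mem_empty_iff_false, iff_false]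
    rintro ⟨⟨hω, h1⟩, ⟨_, h2⟩⟩
    obtain ⟨y, hy, huniq⟩ := (hΔ ω hω).2 t ht
    exact hne ((huniq x₁ ⟨hx₁, h1⟩).trans (huniq x₂ ⟨hx₂, h2⟩).symm)
  · intro t ht
    ext ω
    simp only [Set.mem_iUnion, Set.mem_setOf_eq]
    constructor
    · rintro ⟨x, hx, hω, h1⟩; exact hω
    · intro hω
      obtain ⟨y, ⟨hy, hy1⟩, _⟩ := (hΔ ω hω).2 t ht
      exact ⟨y, hy, hω, hy1⟩
  · rintro z ⟨x, -, rfl⟩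
    obtain ⟨t, ht, hxt⟩ := hcov x
    exact ⟨_, ⟨t, ht, rfl⟩, ⟨x, hxt, rfl⟩⟩
end
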